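/- Let G be a connected graph, let χ = WL²(G), and let C ⊆ C_E(G,χ) be a locally determined set of edge colors such that G[C] is disconnected. Let A be the vertex set of a connected component of G[C]. Then there exist a χ-invariant set W ⊆ V(G) and the vertex set Z of a connected component of G − A such that V(G[C]) \ A ⊆ Z and N_G(Z) = W ∩ A. -/

import Mathlib

namespace WL

open SimpleGraph

/-! ### Iterated colorings of the 2-dimensional Weisfeiler--Leman algorithm

`WLColor C n` is the domain of colors after `n` refinement rounds of 2-WL, where the
input graph carries an arc/pair coloring with values in `C`.  The initial color of a
pair records its ordered isomorphism type (equality pattern, adjacency in both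
directions) together with its input color. -/

def WLColor (C : Type) : ℕ → Type :=
  fun n => Nat.rec (Prop × Prop × Prop × C) (fun _ ih => ih × Multiset (ih × ih)) n

/-- The coloring of ordered pairs computed by 2-WL after `n` rounds on the (directed)
graph with adjacency relation `A` and input pair coloring `κ`. -/
def wlRound {V C : Type} [Fintype V] (A : V → V → Prop) (κ : V → V → C) :
    (n : ℕ) → V × V → WLColor C n
  | 0 => fun p => (p.1 = p.2, A p.1 p.2, A p.2 p.1, κ p.1 p.2)
  | n + 1 => fun p =>
      (wlRound A κ n p,
        Finset.univ.val.map fun u => (wlRound A κ n (u, p.2), wlRound A κ n (p.1, u)))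

/-- Equality of the stable 2-WL colors of a pair `p` of the arc/pair-colored graph
`(A, κ)` and a pair `q` of the arc/pair-colored graph `(B, κ')` (the stable colors
agree iff the colors agree after every finite number of rounds). -/
def wl2EqC {V W C : Type} [Fintype V] [Fintype W]
    (A : V → V → Prop) (κ : V → V → C) (B : W → W → Prop) (κ' : W → W → C)
    (p : V × V) (q : W × W) : Prop :=
  ∀ n, wlRound A κ n p = wlRound B κ' n q

/-- Equality of stable 2-WL colors across two (uncolored) graphs. -/
def wl2Eq {V W : Type} [Fintype V] [Fintype W] (A : V → V → Prop) (B : W → W → Prop)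
    (p : V × V) (q : W × W) : Prop :=
  wl2EqC A (fun _ _ => ()) B (fun _ _ => ()) p q

/-- `wl2 A p q`: the pairs `p` and `q` receive the same color in the stable coloring
`WL²` computed by 2-WL on the graph with adjacency relation `A`. -/
def wl2 {V : Type} [Fintype V] (A : V → V → Prop) (p q : V × V) : Prop :=
  wl2Eq A A p q

/-- Having the same stable 2-WL color is an equivalence relation on pairs. -/
def wl2Setoid {V : Type} [Fintype V] (A : V → V → Prop) : Setoid (V × V) :=
  ⟨wl2 A, ⟨fun _ _ => rfl, fun h n => (h n).symm, fun h₁ h₂ n => (h₁ n).trans (h₂ n)⟩⟩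

/-! ### Color refinement (1-WL) on pair-colored graphs, and the set `Disc` -/

def WL1Color (C : Type) : ℕ → Type :=
  fun n => Nat.rec (List Prop) (fun _ ih => ih × Multiset (ih × C × C)) n

/-- The vertex coloring computed by 1-WL (color refinement) after `n` rounds, on the
complete graph whose pairs are colored by `κ`, where the vertices in the list `vs`
are individualized. -/
def wl1Round {V C : Type} [Fintype V] (κ : V → V → C) (vs : List V) :
    (n : ℕ) → V → WL1Color C n
  | 0 => fun v => vs.map fun x => (x = v : Prop)
  | n + 1 => fun v =>
      (wl1Round κ vs n v,
        Finset.univ.val.map fun w => (wl1Round κ vs n w, κ v w, κ w v))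

/-- `discSet A vs = Disc_G(vs)`: the set of vertices lying in singleton color classes
of the stable coloring computed by 1-WL on the graph with adjacency relation `A`,
where every pair of vertices is initially colored by its `WL²` color and the
vertices of `vs` are individualized. -/
def discSet {V : Type} [Fintype V] (A : V → V → Prop) (vs : List V) : Set V :=
  {v | ∀ w,
    (∀ n, wl1Round (fun x y => Quotient.mk (wl2Setoid A) (x, y)) vs n w =
          wl1Round (fun x y => Quotient.mk (wl2Setoid A) (x, y)) vs n v) → w = v}

/-! ### The k-dimensional Weisfeiler--Leman algorithm -/

def WLkColor (k : ℕ) : ℕ → Type :=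
  fun n => Nat.rec (Fin k → Fin k → Prop × Prop) (fun _ ih => ih × Multiset (Fin k → ih)) n

/-- The coloring of `k`-tuples computed by `k`-WL after `n` rounds on the graph with
adjacency relation `A`. -/
def wlkRound {V : Type} [Fintype V] (A : V → V → Prop) (k : ℕ) :
    (n : ℕ) → (Fin k → V) → WLkColor k n
  | 0 => fun t i j => (t i = t j, A (t i) (t j))
  | n + 1 => fun t =>
      (wlkRound A k n t,
        Finset.univ.val.map fun w => fun i => wlkRound A k n (Function.update t i w))

/-! ### Minors, planarity, connectivity -/

/-- `H` is a minor of `G`, via disjoint nonempty connected branch sets. -/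
def IsMinor {V W : Type} (G : SimpleGraph V) (H : SimpleGraph W) : Prop :=
  ∃ f : W → Set V,
    (∀ w, (f w).Nonempty) ∧
    (∀ w, (G.induce (f w)).Preconnected) ∧
    (∀ w₁ w₂, w₁ ≠ w₂ → Disjoint (f w₁) (f w₂)) ∧
    (∀ w₁ w₂, H.Adj w₁ w₂ → ∃ v₁ ∈ f w₁, ∃ v₂ ∈ f w₂, G.Adj v₁ v₂)

/-- Planarity, via Wagner's theorem: neither `K₅` nor `K₃,₃` is a minor. -/
def IsPlanar {V : Type} (G : SimpleGraph V) : Prop :=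
  ¬ IsMinor G (completeGraph (Fin 5)) ∧
  ¬ IsMinor G (completeBipartiteGraph (Fin 3) (Fin 3))

/-- `S` is a separator of `G`: deleting `S` increases the number of connected
components. -/
def IsSeparator {V : Type} (G : SimpleGraph V) (S : Set V) : Prop :=
  Nat.card G.ConnectedComponent < Nat.card (G.induce Sᶜ).ConnectedComponent

/-- `G` is 3-connected: it is connected and has no separator of size at most 2. -/
def ThreeConnected {V : Type} (G : SimpleGraph V) : Prop :=
  G.Connected ∧ ∀ S : Set V, S.ncard ≤ 2 → ¬ IsSeparator G S

/-! ### Subgraphs induced by WL² edge colors; types of edge colors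

An edge color of `WL²(G)` is represented by a pair `c : V × V` with `G.Adj c.1 c.2`;
the color itself is the `wl2`-equivalence class of `c`. -/

/-- `c` (i.e. the `WL²`-class of `c`) is an edge color of `G`. -/
def EdgeColor {V : Type} (G : SimpleGraph V) (c : V × V) : Prop := G.Adj c.1 c.2

/-- The graph `G[c]` (on the full vertex set): edges are pairs of one of whose
orientations has `WL²`-color `c`. -/
def colorGraph {V : Type} [Fintype V] (G : SimpleGraph V) (c : V × V) : SimpleGraph V :=
  SimpleGraph.fromRel fun v w => G.Adj v w ∧ wl2 G.Adj (v, w) c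

/-- The graph `G[{c,d}]` (on the full vertex set). -/
def colorGraph2 {V : Type} [Fintype V] (G : SimpleGraph V) (c d : V × V) : SimpleGraph V :=
  SimpleGraph.fromRel fun v w => G.Adj v w ∧ (wl2 G.Adj (v, w) c ∨ wl2 G.Adj (v, w) d)

/-- A graph restricted to its support (the set of non-isolated vertices); used to
realize color subgraphs `G[C]` whose vertex set is the set of endpoints of their
edges. -/
def onSupport {V : Type} (H : SimpleGraph V) : SimpleGraph ↥H.support :=
  H.induce H.support

def colorGraphOn {V : Type} [Fintype V] (G : SimpleGraph V) (c : V × V) :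
    SimpleGraph ↥(colorGraph G c).support :=
  onSupport (colorGraph G c)

def colorGraph2On {V : Type} [Fintype V] (G : SimpleGraph V) (c d : V × V) :
    SimpleGraph ↥(colorGraph2 G c d).support :=
  onSupport (colorGraph2 G c d)

/-- The vertex set of the connected component of `H` containing `v`. -/
def compVerts {V : Type} (H : SimpleGraph V) (v : V) : Set V := {w | H.Reachable v w}

/-- The edge set of the connected component of `H` containing `v`. -/
def compEdges {V : Type} (H : SimpleGraph V) (v : V) : Set (Sym2 V) :=
  {e | e ∈ H.edgeSet ∧ ∀ x ∈ e, H.Reachable v x}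

/-- Type I: every connected component is a tree (one face). -/
def TypeI {V : Type} (H : SimpleGraph V) : Prop :=
  ∀ v ∈ H.support, (compEdges H v).ncard + 1 = (compVerts H v).ncard

/-- Type II: every connected component has exactly as many edges as vertices,
i.e. is a cycle (two faces). -/
def TypeII {V : Type} (H : SimpleGraph V) : Prop :=
  ∀ v ∈ H.support, (compEdges H v).ncard = (compVerts H v).ncard

/-- Type III: every connected component has more edges than vertices
(at least three faces). -/
def TypeIII {V : Type} (H : SimpleGraph V) : Prop :=
  ∀ v ∈ H.support, (compVerts H v).ncard < (compEdges H v).ncard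

/-- `G[c]` is unicolored: all its vertices get the same `WL²` vertex color. -/
def Unicolored {V : Type} [Fintype V] (G : SimpleGraph V) (c : V × V) : Prop :=
  ∀ v ∈ (colorGraph G c).support, ∀ w ∈ (colorGraph G c).support, wl2 G.Adj (v, v) (w, w)

/-- `G[c]` is bicolored: exactly two `WL²` vertex colors occur on it. -/
def Bicolored {V : Type} [Fintype V] (G : SimpleGraph V) (c : V × V) : Prop :=
  (∃ v ∈ (colorGraph G c).support, ∃ w ∈ (colorGraph G c).support,
      ¬ wl2 G.Adj (v, v) (w, w)) ∧
  (∀ x ∈ (colorGraph G c).support, ∀ y ∈ (colorGraph G c).support,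
      ∀ z ∈ (colorGraph G c).support,
      wl2 G.Adj (x, x) (y, y) ∨ wl2 G.Adj (x, x) (z, z) ∨ wl2 G.Adj (y, y) (z, z))

/-- Type IIc: `c` has Type II, `G[c]` is unicolored, and the relation
`χ(v,w) = c` is not symmetric (the components of `G[c]` are directed cycles). -/
def HasTypeIIc {V : Type} [Fintype V] (G : SimpleGraph V) (c : V × V) : Prop :=
  TypeII (colorGraph G c) ∧ Unicolored G c ∧
    ∃ v w : V, wl2 G.Adj (v, w) c ∧ ¬ wl2 G.Adj (w, v) c

/-- Type IIa: `c` has Type II but not Type IIc, and `G[c]` is disconnected. -/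
def HasTypeIIa {V : Type} [Fintype V] (G : SimpleGraph V) (c : V × V) : Prop :=
  TypeII (colorGraph G c) ∧ ¬ HasTypeIIc G c ∧ ¬ (colorGraphOn G c).Connected

/-- The graph `G` has Type IIa: some edge color has Type IIa and every edge color
has Type I or Type IIa. -/
def GraphTypeIIa {V : Type} [Fintype V] (G : SimpleGraph V) : Prop :=
  (∃ c : V × V, EdgeColor G c ∧ HasTypeIIa G c) ∧
  (∀ c : V × V, EdgeColor G c → (TypeI (colorGraph G c) ∨ HasTypeIIa G c))

/-- The edge color `c` defines a matching. -/
def DefinesMatching {V : Type} [Fintype V] (G : SimpleGraph V) (c : V × V) : Prop :=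
  ∀ v w : V, wl2 G.Adj (v, w) c →
    (¬ wl2 G.Adj (v, v) (w, w)) ∧
    (∀ v', wl2 G.Adj (v', w) c → v' = v) ∧
    (∀ w', wl2 G.Adj (v, w') c → w' = w)

/-- `x` and `y` are joined by an edge of color `d` or of the reverse color `d⁻¹`. -/
def dAdj {V : Type} [Fintype V] (G : SimpleGraph V) (d : V × V) (x y : V) : Prop :=
  wl2 G.Adj (x, y) d ∨ wl2 G.Adj (y, x) d

/-- The edge color `c` admits short `d`-connections: two vertices in distinct
connected components of `G[c]` are joined by a path of length at most 2 all of
whose edges have color `d` or `d⁻¹`. -/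
def AdmitsShortConnections {V : Type} [Fintype V] (G : SimpleGraph V) (c d : V × V) : Prop :=
  ∃ v₁ ∈ (colorGraph G c).support, ∃ v₂ ∈ (colorGraph G c).support,
    ¬ (colorGraph G c).Reachable v₁ v₂ ∧
    (dAdj G d v₁ v₂ ∨ ∃ u, dAdj G d v₁ u ∧ dAdj G d u v₂)

/-! ### Orbit determination -/

/-- 2-WL determines pair orbits of `G`. -/
def DeterminesPairOrbits {V : Type} [Fintype V] (G : SimpleGraph V) : Prop :=
  ∀ v₁ v₂ : V, ∀ (W : Type) [Fintype W] (H : SimpleGraph W), ∀ w₁ w₂ : W,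
    wl2Eq G.Adj H.Adj (v₁, v₂) (w₁, w₂) → ∃ φ : G ≃g H, φ v₁ = w₁ ∧ φ v₂ = w₂

/-- 2-WL determines arc orbits of `G`. -/
def DeterminesArcOrbits {V : Type} [Fintype V] (G : SimpleGraph V) : Prop :=
  ∀ v₁ v₂ : V, (v₁ = v₂ ∨ G.Adj v₁ v₂) →
    ∀ (W : Type) [Fintype W] (H : SimpleGraph W), ∀ w₁ w₂ : W, (w₁ = w₂ ∨ H.Adj w₁ w₂) →
    wl2Eq G.Adj H.Adj (v₁, v₂) (w₁, w₂) → ∃ φ : G ≃g H, φ v₁ = w₁ ∧ φ v₂ = w₂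

/-- An isomorphism from the directed graph `A` onto the (symmetric) adjacency
relation of the simple graph `H`. -/
def DigraphIsoTo {V W : Type} (A : V → V → Prop) (H : SimpleGraph W) : Prop :=
  ∃ e : V ≃ W, ∀ v w, A v w ↔ H.Adj (e v) (e w)

/-- 2-WL determines arc orbits of the directed graph `A`. -/
def DigraphDeterminesArcOrbits {V : Type} [Fintype V] (A : V → V → Prop) : Prop :=
  ∀ v₁ v₂ : V, (v₁ = v₂ ∨ A v₁ v₂ ∨ A v₂ v₁) →
    ∀ (W : Type) [Fintype W] (B : W → W → Prop), (∀ w, ¬ B w w) →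
    ∀ w₁ w₂ : W, (w₁ = w₂ ∨ B w₁ w₂ ∨ B w₂ w₁) →
    wl2Eq A B (v₁, v₂) (w₁, w₂) →
    ∃ e : V ≃ W, (∀ x y, A x y ↔ B (e x) (e y)) ∧ e v₁ = w₁ ∧ e v₂ = w₂

/-! ### 2-stable colorings -/

/-- A pair coloring `χ` is 2-stable w.r.t. `G`: it refines `WL²(G)` and is not
strictly refined by one round of 2-WL. -/
def IsTwoStable {V C : Type} [Fintype V] (G : SimpleGraph V) (χ : V × V → C) : Prop :=
  (∀ p q : V × V, χ p = χ q → wl2 G.Adj p q) ∧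
  (∀ p q : V × V, χ p = χ q →
    (Finset.univ.val.map fun u => (χ (u, p.2), χ (p.1, u))) =
    (Finset.univ.val.map fun u => (χ (u, q.2), χ (q.1, u))))

/-- `G[Cs]` for a pair coloring `χ` and a set of colors `Cs` (on the full vertex
set). -/
def chiColorGraph {V C : Type} (G : SimpleGraph V) (χ : V × V → C) (Cs : Set C) :
    SimpleGraph V :=
  SimpleGraph.fromRel fun v w => G.Adj v w ∧ χ (v, w) ∈ Cs

/-! ### Components avoiding a set, neighborhoods of sets -/

/-- The vertex set of the connected component of `z` in `G - A`. -/
def componentWithin {V : Type} (G : SimpleGraph V) (A : Set V) (z : V) : Set V :=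
  {y | ∃ p : G.Walk z y, ∀ u ∈ p.support, u ∉ A}

/-- `N_G(Z)`: the set of vertices outside `Z` having a neighbor in `Z`. -/
def outerNeighborhood {V : Type} (G : SimpleGraph V) (Z : Set V) : Set V :=
  {v | v ∉ Z ∧ ∃ u ∈ Z, G.Adj u v}


/-! ### Polyhedral graphs -/

/-- The tetrahedron graph `K₄`. -/
def tetrahedronGraph : SimpleGraph (Fin 4) := completeGraph (Fin 4)

/-- The cube graph `Q₃`. -/
def cubeGraph : SimpleGraph (Fin 3 → Bool) :=
  SimpleGraph.fromRel fun x y => ∃ i, x i ≠ y i ∧ ∀ j, j ≠ i → x j = y j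

/-- The octahedron graph `K₂,₂,₂`. -/
def octahedronGraph : SimpleGraph (Fin 3 × Fin 2) :=
  SimpleGraph.fromRel fun p q => p.1 ≠ q.1

/-- The dodecahedron graph, realized as the generalized Petersen graph GP(10,2). -/
def dodecahedronGraph : SimpleGraph (Bool × Fin 10) :=
  SimpleGraph.fromRel fun p q =>
    (p.1 = false ∧ q.1 = false ∧ q.2 = p.2 + 1) ∨
    (p.1 = true ∧ q.1 = true ∧ q.2 = p.2 + 2) ∨
    (p.1 ≠ q.1 ∧ p.2 = q.2)

/-- The icosahedron graph, realized as a pentagonal antiprism (the circulant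
`Ci₁₀(1,2)`) capped by two apexes. -/
def icosahedronGraph : SimpleGraph (Fin 10 ⊕ Bool) :=
  SimpleGraph.fromRel fun p q =>
    (∃ i j : Fin 10, p = Sum.inl i ∧ q = Sum.inl j ∧ (j = i + 1 ∨ j = i + 2)) ∨
    (∃ (i : Fin 10) (b : Bool), p = Sum.inl i ∧ q = Sum.inr b ∧ (i.val % 2 = 0 ↔ b = false))

/-- The cuboctahedron graph, realized as the line graph (= medial graph) of the cube. -/
def cuboctahedronGraph : SimpleGraph ↥cubeGraph.edgeSet :=
  SimpleGraph.fromRel fun e f =>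
    ∃ v : Fin 3 → Bool, v ∈ (e : Sym2 (Fin 3 → Bool)) ∧ v ∈ (f : Sym2 (Fin 3 → Bool))

/-- The icosidodecahedron graph, realized as the medial graph of the icosahedron. -/
def icosidodecahedronGraph : SimpleGraph ↥icosahedronGraph.edgeSet :=
  SimpleGraph.fromRel fun e f =>
    ∃ v a b : Fin 10 ⊕ Bool, (e : Sym2 (Fin 10 ⊕ Bool)) = s(v, a) ∧
      (f : Sym2 (Fin 10 ⊕ Bool)) = s(v, b) ∧ icosahedronGraph.Adj a b

/-- The rhombic dodecahedron graph, realized as the vertex-face incidence graph of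
the cube (faces of the cube are indexed by `Fin 3 × Bool`). -/
def rhombicDodecahedronGraph : SimpleGraph ((Fin 3 → Bool) ⊕ (Fin 3 × Bool)) :=
  SimpleGraph.fromRel fun p q =>
    ∃ (x : Fin 3 → Bool) (i : Fin 3) (b : Bool), p = Sum.inl x ∧ q = Sum.inr (i, b) ∧ x i = b

/-- The (triangular) faces of the icosahedron are exactly its 3-cliques. -/
def IcosaFace : Type := {s : Finset (Fin 10 ⊕ Bool) // icosahedronGraph.IsNClique 3 s}

/-- The rhombic triacontahedron graph, realized as the vertex-face incidence graph
of the icosahedron. -/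
def rhombicTriacontahedronGraph : SimpleGraph ((Fin 10 ⊕ Bool) ⊕ IcosaFace) :=
  SimpleGraph.fromRel fun p q =>
    ∃ (v : Fin 10 ⊕ Bool) (t : IcosaFace), p = Sum.inl v ∧ q = Sum.inr t ∧ v ∈ t.val

/-! ### Truncating a set of vertices of a (plane) graph -/

/-- Vertex set after truncating the vertices of `W` in `H`: the untouched old
vertices together with one vertex for every arc emanating from a vertex of `W`. -/
def truncVertexType {V : Type} (H : SimpleGraph V) (W : Set V) : Type :=
  {v : V // v ∉ W} ⊕ {p : V × V // p.1 ∈ W ∧ H.Adj p.1 p.2}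

/-- Adjacency after truncating `W` in `H`.  `ringRel v w w'` tells whether the
neighbors `w, w'` of the truncated vertex `v` are consecutive in the cyclic order
around `v` in the plane embedding (for a degree-3 vertex any two are). -/
def truncAdj {V : Type} (H : SimpleGraph V) (W : Set V) (ringRel : V → V → V → Prop) :
    truncVertexType H W → truncVertexType H W → Prop
  | Sum.inl u, Sum.inl u' => H.Adj u.val u'.val
  | Sum.inl u, Sum.inr p => p.val.2 = u.val
  | Sum.inr p, Sum.inr q =>
      (p.val.1 = q.val.1 ∧ ringRel p.val.1 p.val.2 q.val.2) ∨
      (p.val.2 = q.val.1 ∧ q.val.2 = p.val.1)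
  | _, _ => False

/-- The graph obtained from `H` by truncating every vertex of `W`. -/
def truncateGraph {V : Type} (H : SimpleGraph V) (W : Set V) (ringRel : V → V → V → Prop) :
    SimpleGraph (truncVertexType H W) :=
  SimpleGraph.fromRel (truncAdj H W ringRel)

/-- Ring relation for truncating vertices of degree 3 (all pairs consecutive). -/
def triangleRing {V : Type} : V → V → V → Prop := fun _ _ _ => True

/-- Ring relation when the link of each truncated vertex is an induced cycle
(e.g. in a triangulation): consecutive means adjacent. -/
def linkRing {V : Type} (H : SimpleGraph V) : V → V → V → Prop := fun _ w w' => H.Adj w w'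

/-- Ring relation when any two consecutive neighbors of `v` lie on a common
quadrilateral face: consecutive means having a common neighbor besides `v`. -/
def squareRing {V : Type} (H : SimpleGraph V) : V → V → V → Prop :=
  fun v w w' => ∃ u, u ≠ v ∧ H.Adj w u ∧ H.Adj w' u

def truncatedTetrahedronGraph := truncateGraph tetrahedronGraph Set.univ triangleRing
def truncatedCubeGraph := truncateGraph cubeGraph Set.univ triangleRing
def truncatedOctahedronGraph := truncateGraph octahedronGraph Set.univ (linkRing octahedronGraph)
def truncatedDodecahedronGraph := truncateGraph dodecahedronGraph Set.univ triangleRing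
def truncatedIcosahedronGraph := truncateGraph icosahedronGraph Set.univ (linkRing icosahedronGraph)

/-- The chamfered tetrahedron: truncate one bipartition class of the cube. -/
def chamferedTetrahedronGraph :=
  truncateGraph cubeGraph {x : Fin 3 → Bool | (x 0 ^^ (x 1 ^^ x 2)) = true} triangleRing

/-- The chamfered cube: truncate the degree-4 vertices of the rhombic dodecahedron. -/
def chamferedCubeGraph :=
  truncateGraph rhombicDodecahedronGraph {p | ∃ f, p = Sum.inr f}
    (squareRing rhombicDodecahedronGraph)

/-- The chamfered octahedron: truncate the degree-3 vertices of the rhombic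
dodecahedron. -/
def chamferedOctahedronGraph :=
  truncateGraph rhombicDodecahedronGraph {p | ∃ x, p = Sum.inl x} triangleRing

/-- The chamfered dodecahedron: truncate the degree-5 vertices of the rhombic
triacontahedron. -/
def chamferedDodecahedronGraph :=
  truncateGraph rhombicTriacontahedronGraph {p | ∃ v, p = Sum.inl v}
    (squareRing rhombicTriacontahedronGraph)

/-- The chamfered icosahedron: truncate the degree-3 vertices of the rhombic
triacontahedron. -/
def chamferedIcosahedronGraph :=
  truncateGraph rhombicTriacontahedronGraph {p | ∃ t, p = Sum.inr t} triangleRing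

/-- The rhombicuboctahedron, realized as the expansion (cantellation) of the cube:
vertices are the vertex-face flags of the cube. -/
def rhombicuboctahedronGraph :
    SimpleGraph {p : (Fin 3 → Bool) × (Fin 3 × Bool) // p.1 p.2.1 = p.2.2} :=
  SimpleGraph.fromRel fun a b =>
    (a.val.1 = b.val.1 ∧ a.val.2 ≠ b.val.2) ∨
    (a.val.2 = b.val.2 ∧ cubeGraph.Adj a.val.1 b.val.1)

/-- A pentagon of `H`: a 5-element vertex set inducing a 5-cycle. -/
def IsPentagon {V : Type} (H : SimpleGraph V) (s : Finset V) : Prop :=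
  s.card = 5 ∧ ∀ v ∈ s, ((s : Set V) ∩ H.neighborSet v).ncard = 2

/-- The rhombicosidodecahedron, realized as the expansion (cantellation) of the
dodecahedron: vertices are the vertex-face flags of the dodecahedron (its faces
are exactly its pentagons). -/
def rhombicosidodecahedronGraph :
    SimpleGraph {p : (Bool × Fin 10) × Finset (Bool × Fin 10) //
      IsPentagon dodecahedronGraph p.2 ∧ p.1 ∈ p.2} :=
  SimpleGraph.fromRel fun a b =>
    (a.val.1 = b.val.1 ∧ a.val.2 ≠ b.val.2) ∨
    (a.val.2 = b.val.2 ∧ dodecahedronGraph.Adj a.val.1 b.val.1)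

/-! ### Subdivisions -/

/-- Vertex set of the `f`-subdivision of `H`: old vertices plus `f e` subdivision
vertices for every edge `e`. -/
def subdivVertexType {V : Type} (H : SimpleGraph V) (f : Sym2 V → ℕ) : Type :=
  V ⊕ {x : Sym2 V × ℕ // x.1 ∈ H.edgeSet ∧ x.2 < f x.1}

def subdivAdj {V : Type} (H : SimpleGraph V) (f : Sym2 V → ℕ) :
    subdivVertexType H f → subdivVertexType H f → Prop
  | Sum.inl u, Sum.inl v => H.Adj u v ∧ f s(u, v) = 0
  | Sum.inl u, Sum.inr x => u ∈ x.val.1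
  | _, _ => False

/-- The `f`-subdivision of `H`: each edge `e` is replaced by `f e` parallel paths
of length 2 (edges with `f e = 0` are kept). -/
def parallelSubdivision {V : Type} (H : SimpleGraph V) (f : Sym2 V → ℕ) :
    SimpleGraph (subdivVertexType H f) :=
  SimpleGraph.fromRel (subdivAdj H f)

/-- `G` is (isomorphic to) a parallel subdivision of `H`. -/
def IsParallelSubdivisionOf {α V : Type} (G : SimpleGraph α) (H : SimpleGraph V) : Prop :=
  ∃ f : Sym2 V → ℕ, Nonempty (G ≃g parallelSubdivision H f)

/-- The `s`-subdivision of `H`: every edge is replaced by `s` parallel paths of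
length 2. -/
def sSubdivision {V : Type} (H : SimpleGraph V) (s : ℕ) :
    SimpleGraph (subdivVertexType H (fun _ => s)) :=
  parallelSubdivision H (fun _ => s)

/-- Vertex set of the `C₄`-subdivision of `H`: old vertices, plus two vertices for
each arc of `H`. -/
def c4VertexType {V : Type} (H : SimpleGraph V) : Type :=
  V ⊕ ({p : V × V // H.Adj p.1 p.2} × Bool)

def c4Adj {V : Type} (H : SimpleGraph V) : c4VertexType H → c4VertexType H → Prop
  | Sum.inl v, Sum.inr (a, false) => a.val.1 = v
  | Sum.inr (a, false), Sum.inr (b, true) => a = b ∨ (a.val.1 = b.val.2 ∧ a.val.2 = b.val.1)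
  | _, _ => False

/-- The `C₄`-subdivision of `H`: every edge `vw` is replaced by a 4-cycle attached
to `v` and `w` at opposite vertices. -/
def c4Subdivision {V : Type} (H : SimpleGraph V) : SimpleGraph (c4VertexType H) :=
  SimpleGraph.fromRel (c4Adj H)

/-! ### Cycles, prisms, `C_m^*`, `K_{2,h}^*`, bipyramids -/

/-- The cycle graph on `ZMod m` (for `m ≥ 3`). -/
def cycGraph (m : ℕ) : SimpleGraph (ZMod m) := SimpleGraph.fromRel fun i j => j = i + 1

/-- The `m`-side prism `C_m □ K₂`. -/
def prismGraph (m : ℕ) : SimpleGraph (ZMod m × Fin 2) :=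
  (cycGraph m).boxProd (completeGraph (Fin 2))

/-- The graph `C_m^*`: `m` four-cycles linked in a cyclic fashion. -/
def cmStarGraph (m : ℕ) : SimpleGraph (ZMod m × Fin 4) :=
  SimpleGraph.fromRel fun p q =>
    (p.1 = q.1 ∧ q.2 = p.2 + 1) ∨ (p.2 = 2 ∧ q.2 = 0 ∧ q.1 = p.1 + 1)

/-- The graph `K_{2,h}^*`: `h` disjoint four-cycles, all linked to two extra
vertices at opposite points. -/
def k2hStarGraph (h : ℕ) : SimpleGraph ((Fin h × Fin 4) ⊕ Bool) :=
  SimpleGraph.fromRel fun x y =>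
    (∃ p q : Fin h × Fin 4, x = Sum.inl p ∧ y = Sum.inl q ∧ p.1 = q.1 ∧ q.2 = p.2 + 1) ∨
    (∃ (p : Fin h × Fin 4) (b : Bool), x = Sum.inl p ∧ y = Sum.inr b ∧
      ((b = false ∧ p.2 = 0) ∨ (b = true ∧ p.2 = 2)))

/-- The bipyramid `P*_m`: a cycle of length `m` plus two apexes joined to all of
its vertices. -/
def bipyramidGraph (m : ℕ) : SimpleGraph (ZMod m ⊕ Fin 2) :=
  SimpleGraph.fromRel fun x y =>
    (∃ i j : ZMod m, x = Sum.inl i ∧ y = Sum.inl j ∧ j = i + 1) ∨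
    (∃ (i : ZMod m) (u : Fin 2), x = Sum.inl i ∧ y = Sum.inr u)


/-! ### Contracting the components of `G[c]`, and arc-colored graphs -/

/-- The setoid on `V` whose classes are the connected components of `G[c]`
(and singletons). -/
def contractSetoid {V : Type} [Fintype V] (G : SimpleGraph V) (c : V × V) : Setoid V :=
  (colorGraph G c).reachableSetoid

noncomputable instance contractFintype {V : Type} [Fintype V] (G : SimpleGraph V) (c : V × V) :
    Fintype (Quotient (contractSetoid G c)) :=
  @Quotient.fintype V _ (contractSetoid G c) fun _ _ => Classical.dec _

/-- The quotient graph `G/c` obtained by contracting every connected component of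
`G[c]` to a single vertex. -/
def contractGraph {V : Type} [Fintype V] (G : SimpleGraph V) (c : V × V) :
    SimpleGraph (Quotient (contractSetoid G c)) :=
  SimpleGraph.fromRel fun X Y =>
    ∃ v w : V, Quotient.mk (contractSetoid G c) v = X ∧
      Quotient.mk (contractSetoid G c) w = Y ∧ G.Adj v w

/- The pair coloring `χ/c` of `G/c`: the multiset of `WL²(G)`-colors of the pairs
joining the two contracted classes. -/
open Classical in
noncomputable def contractColor {V : Type} [Fintype V] (G : SimpleGraph V) (c : V × V) :
    Quotient (contractSetoid G c) → Quotient (contractSetoid G c) →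
      Multiset (Quotient (wl2Setoid G.Adj)) :=
  fun X Y =>
    ((Finset.univ (α := V × V)).val.filter fun p =>
        Quotient.mk (contractSetoid G c) p.1 = X ∧ Quotient.mk (contractSetoid G c) p.2 = Y).map
      (Quotient.mk (wl2Setoid G.Adj))

/- The arc coloring associated with a pair coloring `κ`: arcs keep their color,
non-arcs are uncolored. -/
open Classical in
noncomputable def arcColor {V C : Type} (A : V → V → Prop) (κ : V → V → C) :
    V → V → Option C :=
  fun x y => if x = y ∨ A x y then some (κ x y) else none

/-- 2-WL determines arc orbits of the arc-colored graph `(G, κ)`. -/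
def CDeterminesArcOrbits {V C : Type} [Fintype V] (G : SimpleGraph V) (κ : V → V → C) : Prop :=
  ∀ v₁ v₂ : V, (v₁ = v₂ ∨ G.Adj v₁ v₂) →
    ∀ (W : Type) [Fintype W] (H : SimpleGraph W) (κ' : W → W → C),
    ∀ w₁ w₂ : W, (w₁ = w₂ ∨ H.Adj w₁ w₂) →
    wl2EqC G.Adj (arcColor G.Adj κ) H.Adj (arcColor H.Adj κ') (v₁, v₂) (w₁, w₂) →
    ∃ e : V ≃ W, (∀ x y, G.Adj x y ↔ H.Adj (e x) (e y)) ∧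
      (∀ x y, x = y ∨ G.Adj x y → κ x y = κ' (e x) (e y)) ∧ e v₁ = w₁ ∧ e v₂ = w₂

/-- 2-WL determines pair orbits of the arc-colored graph `(G, κ)`. -/
def CDeterminesPairOrbits {V C : Type} [Fintype V] (G : SimpleGraph V) (κ : V → V → C) : Prop :=
  ∀ v₁ v₂ : V,
    ∀ (W : Type) [Fintype W] (H : SimpleGraph W) (κ' : W → W → C),
    ∀ w₁ w₂ : W,
    wl2EqC G.Adj (arcColor G.Adj κ) H.Adj (arcColor H.Adj κ') (v₁, v₂) (w₁, w₂) →
    ∃ e : V ≃ W, (∀ x y, G.Adj x y ↔ H.Adj (e x) (e y)) ∧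
      (∀ x y, x = y ∨ G.Adj x y → κ x y = κ' (e x) (e y)) ∧ e v₁ = w₁ ∧ e v₂ = w₂


/-!
Contract every component of `H = G[C]` to a point and call two components adjacent when a path
of `G` whose inner vertices avoid `V(H)` joins them. Distances in this contracted graph are
determined by `WL²`, hence so is the sum `σ(x)` of the distances from `x` to the vertices of a
color class `c` that meets every component of `H` (local determination).

Suppose the vertices of `H` outside `A` lie in several components of `G - A`. Let `K` be one
of them containing fewest vertices of `c`, let `x_v ∈ c` lie in `K` one step away from `A`, and
let `x_A ∈ c` lie in `A`. Compared with `x_v`, the vertex `x_A` is at least one step closer to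
every vertex outside `K` and at most one step farther from every vertex in `K`. As `σ(x_A) =
σ(x_v)`, the class `c` has at most as many vertices outside `K` as inside; but outside `K` it
has a vertex in `A` and, by the choice of `K`, at least as many vertices in another component
as in `K`. So `V(H) \ A` lies in one component `Z` of `G - A`.

A vertex `u` of `A` lies in `N(Z)` iff it has a neighbor from which a path avoiding the
component of `u` in `H` reaches `V(H)`, a property of the color of `u`. Hence `N(Z) = W ∩ A`
for the union `W` of the color classes meeting `N(Z)`.
-/

section Stable

variable {V : Type} [Fintype V] {R : V → V → Prop} {p q : V × V}

theorem exists_wl2_iff_wlRound :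
    ∃ N, ∀ p q : V × V,
      wl2 R p q ↔ wlRound R (fun _ _ => ()) N p = wlRound R (fun _ _ => ()) N q := by
  let level : ℕ → Set ((V × V) × (V × V)) := fun n =>
    {pq | wlRound R (fun _ _ => ()) n pq.1 = wlRound R (fun _ _ => ()) n pq.2}
  have hanti : Antitone level := antitone_nat_of_succ_le fun n _ h => congrArg Prod.fst h
  obtain ⟨N, hN⟩ := WellFoundedLT.antitone_chain_condition hanti
  refine ⟨N, fun p q => ⟨fun h => h N, fun h n => ?_⟩⟩
  rcases le_total n N with hn | hn
  · exact hanti hn (show (p, q) ∈ level N from h)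
  · exact (hN n hn ▸ h : (p, q) ∈ level n)

theorem wl2.symm (h : wl2 R p q) : wl2 R q p := fun n => (h n).symm

theorem wl2.trans {r : V × V} (h : wl2 R p q) (h' : wl2 R q r) : wl2 R p r :=
  fun n => (h n).trans (h' n)

theorem wl2.eq_iff (h : wl2 R p q) : p.1 = p.2 ↔ q.1 = q.2 :=
  iff_of_eq (congrArg Prod.fst (h 0))

theorem wl2.rel_iff (h : wl2 R p q) : R p.1 p.2 ↔ R q.1 q.2 :=
  iff_of_eq (congrArg (·.2.1) (h 0))

theorem wlRound_swap_congr :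
    ∀ (n : ℕ) {p q : V × V}, wlRound R (fun _ _ => ()) n p = wlRound R (fun _ _ => ()) n q →
      wlRound R (fun _ _ => ()) n p.swap = wlRound R (fun _ _ => ()) n q.swap
  | 0, p, q, h => by
    have h' : ((p.1 = p.2 : Prop), R p.1 p.2, R p.2 p.1, ()) =
        ((q.1 = q.2 : Prop), R q.1 q.2, R q.2 q.1, ()) := h
    show ((p.2 = p.1 : Prop), R p.2 p.1, R p.1 p.2, ()) =
      ((q.2 = q.1 : Prop), R q.2 q.1, R q.1 q.2, ())
    simp only [Prod.mk.injEq, eq_comm (a := p.2), eq_comm (a := q.2)] at h' ⊢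
    exact ⟨h'.1, h'.2.2.1, h'.2.1, trivial⟩
  | n + 1, p, q, h => by
    let ρ := wlRound R (fun _ _ => ()) n
    -- by induction, the color of `x.swap` is a function `g` of the color of `x`
    have hfac : Function.FactorsThrough (fun x => ρ x.swap) ρ :=
      fun _ _ hxy => wlRound_swap_congr n hxy
    let g := Function.extend ρ (fun x => ρ x.swap) id
    have key : ∀ x : V × V, (Finset.univ.val.map fun u => (ρ (u, x.1), ρ (x.2, u))) =
        (Finset.univ.val.map fun u => (ρ (u, x.2), ρ (x.1, u))).map fun c => (g c.2, g c.1) := by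
      intro x
      simp only [Multiset.map_map, Function.comp_def, g, hfac.extend_apply]
      rfl
    have hM : (Finset.univ.val.map fun u => (ρ (u, p.2), ρ (p.1, u))) =
        Finset.univ.val.map fun u => (ρ (u, q.2), ρ (q.1, u)) := congrArg Prod.snd h
    refine Prod.ext (wlRound_swap_congr n (congrArg Prod.fst h)) ?_
    show (Finset.univ.val.map fun u => (ρ (u, p.1), ρ (p.2, u))) =
      Finset.univ.val.map fun u => (ρ (u, q.1), ρ (q.2, u))
    rw [key p, key q, hM]

theorem wl2.swap (h : wl2 R p q) : wl2 R p.swap q.swap := fun n => wlRound_swap_congr n (h n)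

def wl2Neighbors (R : V → V → Prop) (p : V × V) :
    Multiset (Quotient (wl2Setoid R) × Quotient (wl2Setoid R)) :=
  Finset.univ.val.map fun u => (Quotient.mk _ (u, p.2), Quotient.mk _ (p.1, u))

theorem wl2.wl2Neighbors_eq (h : wl2 R p q) : wl2Neighbors R p = wl2Neighbors R q := by
  obtain ⟨N, hN⟩ := exists_wl2_iff_wlRound (R := R)
  let ρ := wlRound R (fun _ _ => ()) N
  -- from round `N` on the partition is stable, so the stable color is a function `g` of `ρ`
  have hfac : Function.FactorsThrough (Quotient.mk (wl2Setoid R)) ρ :=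
    fun x y hxy => Quotient.sound ((hN x y).mpr hxy)
  let g := Function.extend ρ (Quotient.mk (wl2Setoid R)) fun _ => Quotient.mk _ p
  have key : ∀ x : V × V, wl2Neighbors R x =
      (Finset.univ.val.map fun u => (ρ (u, x.2), ρ (x.1, u))).map (Prod.map g g) := by
    intro x
    simp only [wl2Neighbors, Multiset.map_map, Function.comp_def, Prod.map, g, hfac.extend_apply]
  have hM : (Finset.univ.val.map fun u => (ρ (u, p.2), ρ (p.1, u))) =
      Finset.univ.val.map fun u => (ρ (u, q.2), ρ (q.1, u)) := congrArg Prod.snd (h (N + 1))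
  rw [key p, key q, hM]

theorem wl2.exists_transfer {u w v w' : V} (h : wl2 R (u, w) (v, w')) (x : V) :
    ∃ y, wl2 R (x, w) (y, w') ∧ wl2 R (u, x) (v, y) := by
  have hx : (Quotient.mk (wl2Setoid R) (x, w), Quotient.mk (wl2Setoid R) (u, x)) ∈
      wl2Neighbors R (v, w') :=
    h.wl2Neighbors_eq ▸ Multiset.mem_map.mpr ⟨x, Finset.mem_univ_val x, rfl⟩
  obtain ⟨y, -, hy⟩ := Multiset.mem_map.mp hx
  obtain ⟨h₁, h₂⟩ := Prod.ext_iff.mp hy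
  exact ⟨y, (Quotient.exact h₁).symm, (Quotient.exact h₂).symm⟩

theorem wl2.diag_left {u w v w' : V} (h : wl2 R (u, w) (v, w')) : wl2 R (u, u) (v, v) := by
  obtain ⟨y, -, hy⟩ := h.exists_transfer u
  obtain rfl : v = y := hy.eq_iff.mp rfl
  exact hy

theorem wl2.diag_right {u w v w' : V} (h : wl2 R (u, w) (v, w')) : wl2 R (w, w) (w', w') := by
  obtain ⟨y, hy, -⟩ := h.exists_transfer w
  obtain rfl : y = w' := hy.eq_iff.mp rfl
  exact hy

theorem wl2.sum_eq {M : Type} [AddCommMonoid M] {F : V → V → M}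
    (hF : ∀ ⦃x y x' y' : V⦄, wl2 R (x, y) (x', y') → F x y = F x' y') {x x' : V}
    (h : wl2 R (x, x) (x', x')) : ∑ y, F x y = ∑ y, F x' y := by
  let F' : Quotient (wl2Setoid R) → M := Quotient.lift (fun p => F p.1 p.2) fun _ _ => (hF ·)
  have key : ∀ z, ∑ y, F z y = ((wl2Neighbors R (z, z)).map fun c => F' c.2).sum := by
    intro z
    simp only [wl2Neighbors, Multiset.map_map, Function.comp_def, Finset.sum_eq_multiset_sum]
    rfl
  rw [key, key, h.wl2Neighbors_eq]

end Stable

section Invariant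

variable {V : Type} [Fintype V] {R : V → V → Prop}

def IsWLInvariant (R : V → V → Prop) (P : V → V → Prop) : Prop :=
  ∀ ⦃x y x' y' : V⦄, wl2 R (x, y) (x', y') → P x y → P x' y'

namespace IsWLInvariant

variable {P Q : V → V → Prop}

theorem iff (hP : IsWLInvariant R P) {x y x' y' : V} (h : wl2 R (x, y) (x', y')) :
    P x y ↔ P x' y' :=
  ⟨(hP h ·), (hP h.symm ·)⟩

theorem rel : IsWLInvariant R R := fun _ _ _ _ h => h.rel_iff.mp

theorem eq : IsWLInvariant R (· = ·) := fun _ _ _ _ h => h.eq_iff.mp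

theorem not (hP : IsWLInvariant R P) : IsWLInvariant R fun x y => ¬ P x y :=
  fun _ _ _ _ h hn hp => hn (hP h.symm hp)

theorem and (hP : IsWLInvariant R P) (hQ : IsWLInvariant R Q) :
    IsWLInvariant R fun x y => P x y ∧ Q x y :=
  fun _ _ _ _ h hpq => ⟨hP h hpq.1, hQ h hpq.2⟩

theorem or (hP : IsWLInvariant R P) (hQ : IsWLInvariant R Q) :
    IsWLInvariant R fun x y => P x y ∨ Q x y :=
  fun _ _ _ _ h hpq => hpq.imp (hP h) (hQ h)

theorem swap (hP : IsWLInvariant R P) : IsWLInvariant R fun x y => P y x :=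
  fun _ _ _ _ h => hP h.swap

theorem comp (hP : IsWLInvariant R P) (hQ : IsWLInvariant R Q) :
    IsWLInvariant R fun x z => ∃ y, P x y ∧ Q y z := by
  rintro x z x' z' h ⟨y, hxy, hyz⟩
  obtain ⟨y', hyz', hxy'⟩ := h.exists_transfer y
  exact ⟨y', hP hxy' hxy, hQ hyz' hyz⟩

theorem exists_right (hP : IsWLInvariant R P) : IsWLInvariant R fun x _ => ∃ y, P x y := by
  rintro x _ x' _ h ⟨y, hxy⟩
  obtain ⟨y', -, hxy'⟩ := h.diag_left.exists_transfer y
  exact ⟨y', hP hxy' hxy⟩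

theorem reflTransGen (hP : IsWLInvariant R P) : IsWLInvariant R (Relation.ReflTransGen P) := by
  intro x z x' z' h hxz
  induction hxz generalizing z' with
  | refl =>
    obtain rfl : x' = z' := h.eq_iff.mp rfl
    exact .refl
  | tail _ hyz ih =>
    obtain ⟨y', hyz', hxy'⟩ := h.exists_transfer _
    exact (ih hxy').tail (hP hyz' hyz)

theorem fromRel (hP : IsWLInvariant R P) : IsWLInvariant R (SimpleGraph.fromRel P).Adj := by
  have e : (SimpleGraph.fromRel P).Adj = fun x y => ¬ x = y ∧ (P x y ∨ P y x) := by
    ext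
    simp [SimpleGraph.fromRel_adj]
  exact e ▸ eq.not.and (hP.or hP.swap)

end IsWLInvariant

end Invariant

section Components

variable {V : Type} {G H : SimpleGraph V} {A : Set V} {x y : V}

/-- `G - A` on the full vertex set: the vertices of `A` become isolated. -/
def avoiding (G : SimpleGraph V) (A : Set V) : SimpleGraph V where
  Adj a b := G.Adj a b ∧ a ∉ A ∧ b ∉ A
  symm := ⟨fun _ _ h => ⟨h.1.symm, h.2.2, h.2.1⟩⟩
  loopless := ⟨fun _ h => h.1.ne rfl⟩

@[simp]
theorem avoiding_adj {a b : V} : (avoiding G A).Adj a b ↔ G.Adj a b ∧ a ∉ A ∧ b ∉ A := Iff.rfl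

theorem notMem_of_reachable_avoiding (h : (avoiding G A).Reachable x y) (hx : x ∉ A) : y ∉ A := by
  by_cases hxy : x = y
  · exact hxy ▸ hx
  obtain ⟨z, hz⟩ := (avoiding G A).mem_support.mp (mem_support_of_reachable (Ne.symm hxy) h.symm)
  exact (avoiding_adj.mp hz).2.1

theorem mem_support_of_reachable_of_mem_support {a b : V} (h : H.Reachable a b)
    (ha : a ∈ H.support) : b ∈ H.support := by
  by_cases hab : a = b
  · exact hab ▸ ha
  · exact mem_support_of_reachable (Ne.symm hab) h.symm

theorem compVerts_eq_of_mem {a b : V} (h : b ∈ compVerts H a) : compVerts H b = compVerts H a :=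
  Set.ext fun _ => ⟨Reachable.trans h, Reachable.trans (Reachable.symm h)⟩

theorem onSupport_connected {a : V} (ha : a ∈ H.support) (h : H.support ⊆ compVerts H a) :
    (onSupport H).Connected := by
  classical
  have : Nonempty H.support := ⟨⟨a, ha⟩⟩
  refine ⟨fun s t => ?_⟩
  obtain ⟨p⟩ : H.Reachable s t := (Reachable.symm (h s.2)).trans (h t.2)
  exact (p.induce H.support fun x hx =>
    mem_support_of_reachable_of_mem_support (p.takeUntil x hx).reachable s.2).reachable

theorem mem_componentWithin_iff :
    y ∈ componentWithin G A x ↔ x ∉ A ∧ (avoiding G A).Reachable x y := by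
  constructor
  · rintro ⟨p, hp⟩
    refine ⟨hp x p.start_mem_support, ?_⟩
    induction p with
    | nil => rfl
    | cons h p ih =>
      simp only [Walk.support_cons, List.mem_cons, forall_eq_or_imp] at hp
      exact (avoiding_adj.mpr ⟨h, hp.1, hp.2 _ p.start_mem_support⟩).reachable.trans (ih hp.2)
  · rintro ⟨hx, ⟨p⟩⟩
    induction p with
    | nil => exact ⟨.nil, by simpa using hx⟩
    | cons h p ih =>
      obtain ⟨hadj, -, hv⟩ := avoiding_adj.mp h
      obtain ⟨q, hq⟩ := ih hv
      exact ⟨.cons hadj q, by simpa [Walk.support_cons] using ⟨hx, hq⟩⟩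

theorem mem_componentWithin_symm (h : y ∈ componentWithin G A x) :
    x ∈ componentWithin G A y := by
  rw [mem_componentWithin_iff] at h ⊢
  exact ⟨notMem_of_reachable_avoiding h.2 h.1, h.2.symm⟩

theorem mem_componentWithin_trans {z : V} (h : y ∈ componentWithin G A x)
    (h' : z ∈ componentWithin G A y) : z ∈ componentWithin G A x := by
  rw [mem_componentWithin_iff] at h h' ⊢
  exact ⟨h.1, h.2.trans h'.2⟩

theorem reachable_avoiding_of_reflTransGen {r : V → V → Prop}
    (hr : ∀ ⦃a b⦄, a ∉ A → r a b → G.Adj a b ∧ b ∉ A) (hx : x ∉ A)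
    (h : Relation.ReflTransGen r x y) : (avoiding G A).Reachable x y := by
  induction h using Relation.ReflTransGen.head_induction_on with
  | refl => rfl
  | head hab _ ih =>
    obtain ⟨hadj, hb⟩ := hr hx hab
    exact (avoiding_adj.mpr ⟨hadj, hx, hb⟩).reachable.trans (ih hb)

theorem reachable_avoiding_of_reachable (hHG : H ≤ G)
    (hA : ∀ ⦃a b⦄, H.Reachable a b → a ∈ A → b ∈ A) (h : H.Reachable x y) (hx : x ∉ A) :
    (avoiding G A).Reachable x y :=
  reachable_avoiding_of_reflTransGen
    (fun _ _ ha hab => ⟨hHG hab, fun hb => ha (hA hab.reachable.symm hb)⟩) hx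
    ((reachable_iff_reflTransGen x y).mp h)

end Components

section ContractedDistance

variable {V : Type} {G H : SimpleGraph V} {A : Set V} {u v w x y : V} {k : ℕ}

def LinkedOutside (G H : SimpleGraph V) (u v : V) : Prop :=
  v ∈ H.support ∧
    ∃ w, Relation.ReflTransGen (fun a b => G.Adj a b ∧ b ∉ H.support) u w ∧ G.Adj w v

theorem LinkedOutside.reachable_avoiding (hAsupp : A ⊆ H.support) (h : LinkedOutside G H u v)
    (hu : u ∉ A) (hv : v ∉ A) : (avoiding G A).Reachable u v := by
  obtain ⟨-, w, huw, hwv⟩ := h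
  have huw' := reachable_avoiding_of_reflTransGen
    (fun _ _ _ hab => ⟨hab.1, fun hb => hab.2 (hAsupp hb)⟩) hu huw
  exact huw'.trans (avoiding_adj.mpr ⟨hwv, notMem_of_reachable_avoiding huw' hu, hv⟩).reachable

/-- `StepReach G H k x y`: contract every component of `H` to a vertex, and join two of them
when they are `LinkedOutside`; then the component of `y` is at distance at most `k` from that
of `x`. -/
def StepReach (G H : SimpleGraph V) : ℕ → V → V → Prop
  | 0 => H.Reachable
  | k + 1 => fun x y => StepReach G H k x y ∨
      ∃ u, StepReach G H k x u ∧ ∃ v, LinkedOutside G H u v ∧ H.Reachable v y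

namespace StepReach

theorem reachable_left (hx : H.Reachable x' x) (h : StepReach G H k x y) :
    StepReach G H k x' y := by
  induction k generalizing y with
  | zero => exact hx.trans h
  | succ k ih => exact h.imp ih fun ⟨u, hu, huy⟩ => ⟨u, ih hu, huy⟩

theorem reachable_right (h : StepReach G H k x y) (hy : H.Reachable y y') :
    StepReach G H k x y' := by
  induction k generalizing y with
  | zero => exact Reachable.trans h hy
  | succ k ih =>
    exact h.imp (ih · hy) fun ⟨u, hu, v, huv, hvy⟩ => ⟨u, hu, v, huv, hvy.trans hy⟩

theorem trans {a b : ℕ} (h₁ : StepReach G H a x w) (h₂ : StepReach G H b w y) :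
    StepReach G H (a + b) x y := by
  induction b generalizing y with
  | zero => exact h₁.reachable_right h₂
  | succ b ih => exact h₂.imp ih fun ⟨u, hu, huy⟩ => ⟨u, ih hu, huy⟩

theorem exists_mem_of_not_reachable_avoiding (hHG : H ≤ G) (hAsupp : A ⊆ H.support)
    (hA : ∀ ⦃a b⦄, H.Reachable a b → a ∈ A → b ∈ A) (hx : x ∉ A) (h : StepReach G H k x y)
    (hy : ¬ (avoiding G A).Reachable x y) : ∃ a ∈ A, ∃ j, j + 1 ≤ k ∧ StepReach G H j a y := by
  induction k generalizing y with
  | zero => exact absurd (reachable_avoiding_of_reachable hHG hA h hx) hy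
  | succ k ih =>
    rcases h with h | ⟨u, hu, v, huv, hvy⟩
    · obtain ⟨a, ha, j, hj, hay⟩ := ih h hy
      exact ⟨a, ha, j, by omega, hay⟩
    by_cases hxu : (avoiding G A).Reachable x u
    · by_cases hv : v ∈ A
      · exact ⟨v, hv, 0, by omega, hvy⟩
      refine absurd ?_ hy
      have hu : u ∉ A := notMem_of_reachable_avoiding hxu hx
      exact hxu.trans ((huv.reachable_avoiding hAsupp hu hv).trans
        (reachable_avoiding_of_reachable hHG hA hvy hv))
    · obtain ⟨a, ha, j, hj, hau⟩ := ih hu hxu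
      exact ⟨a, ha, j + 1, by omega, .inr ⟨u, hau, v, huv, hvy⟩⟩

theorem exists_linkedOutside (hHG : H ≤ G) (hAsupp : A ⊆ H.support)
    (hA : ∀ ⦃a b⦄, H.Reachable a b → a ∈ A → b ∈ A) (hx : x ∈ A) (hy : y ∉ A)
    (h : StepReach G H k x y) :
    ∃ a ∈ A, ∃ v, LinkedOutside G H a v ∧ (avoiding G A).Reachable v y := by
  induction k generalizing y with
  | zero => exact absurd (hA h hx) hy
  | succ k ih =>
    rcases h with h | ⟨u, hu, v, huv, hvy⟩
    · exact ih hy h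
    have hv : v ∉ A := fun hv => hy (hA hvy hv)
    have hvy' := reachable_avoiding_of_reachable hHG hA hvy hv
    by_cases huA : u ∈ A
    · exact ⟨u, huA, v, huv, hvy'⟩
    obtain ⟨a, ha, v', hav', hv'u⟩ := ih huA hu
    exact ⟨a, ha, v', hav', hv'u.trans ((huv.reachable_avoiding hAsupp huA hv).trans hvy')⟩

end StepReach

theorem exists_stepReach (hconn : G.Connected) (x : V) (hy : y ∈ H.support) :
    ∃ k, StepReach G H k x y := by
  have hwalk : ∀ z, ∃ k u, StepReach G H k x u ∧
      Relation.ReflTransGen (fun a b => G.Adj a b ∧ b ∉ H.support) u z := by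
    intro z
    induction (reachable_iff_reflTransGen x z).mp (hconn.preconnected x z) with
    | refl => exact ⟨0, x, Reachable.refl x, .refl⟩
    | @tail b c _ hbc ih =>
      obtain ⟨k, u, hk, hub⟩ := ih
      by_cases hc : c ∈ H.support
      · exact ⟨k + 1, c, .inr ⟨u, hk, c, ⟨hc, b, hub, hbc⟩, Reachable.refl c⟩, .refl⟩
      · exact ⟨k, u, hk, hub.tail ⟨hbc, hc⟩⟩
  obtain ⟨k, u, hk, huy⟩ := hwalk y
  rcases huy.cases_tail with rfl | ⟨_, _, -, hy'⟩
  · exact ⟨k, hk⟩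
  · exact absurd hy hy'

-- `sInf ∅ = 0`: meaningful only when some `StepReach G H k x y` holds.
noncomputable def stepDist (G H : SimpleGraph V) (x y : V) : ℕ := sInf {k | StepReach G H k x y}

theorem stepDist_le (h : StepReach G H k x y) : stepDist G H x y ≤ k := Nat.sInf_le h

theorem stepReach_stepDist (hconn : G.Connected) (hy : y ∈ H.support) :
    StepReach G H (stepDist G H x y) x y :=
  Nat.sInf_mem (exists_stepReach hconn x hy)

end ContractedDistance

section Invariance

variable {V : Type} [Fintype V] {G H : SimpleGraph V} {x y x' y' : V}

theorem isWLInvariant_reachable (hH : IsWLInvariant G.Adj H.Adj) :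
    IsWLInvariant G.Adj H.Reachable := by
  have e : H.Reachable = Relation.ReflTransGen H.Adj := by
    ext
    exact reachable_iff_reflTransGen _ _
  exact e ▸ hH.reflTransGen

theorem isWLInvariant_mem_support (hH : IsWLInvariant G.Adj H.Adj) :
    IsWLInvariant G.Adj fun x _ => x ∈ H.support := by
  simpa only [mem_support] using hH.exists_right

theorem isWLInvariant_linkedOutside (hH : IsWLInvariant G.Adj H.Adj) :
    IsWLInvariant G.Adj (LinkedOutside G H) :=
  (isWLInvariant_mem_support hH).swap.and
    ((IsWLInvariant.rel.and (isWLInvariant_mem_support hH).swap.not).reflTransGen.comp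
      IsWLInvariant.rel)

theorem isWLInvariant_stepReach (hH : IsWLInvariant G.Adj H.Adj) :
    ∀ k, IsWLInvariant G.Adj (StepReach G H k)
  | 0 => isWLInvariant_reachable hH
  | k + 1 => (isWLInvariant_stepReach hH k).or ((isWLInvariant_stepReach hH k).comp
      ((isWLInvariant_linkedOutside hH).comp (isWLInvariant_reachable hH)))

theorem stepDist_congr (hH : IsWLInvariant G.Adj H.Adj) (h : wl2 G.Adj (x, y) (x', y')) :
    stepDist G H x y = stepDist G H x' y' :=
  congrArg sInf (Set.ext fun k => (isWLInvariant_stepReach hH k).iff h)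

theorem isWLInvariant_exists_mem_support_componentWithin (hH : IsWLInvariant G.Adj H.Adj) :
    IsWLInvariant G.Adj fun u x => ∃ z ∈ H.support, z ∈ componentWithin G (compVerts H u) x := by
  rintro u x u' x' h ⟨z, hz, hxz⟩
  simp only [mem_componentWithin_iff] at hxz ⊢
  obtain ⟨hx, hxz⟩ := hxz
  rw [reachable_iff_reflTransGen] at hxz
  induction hxz using Relation.ReflTransGen.head_induction_on generalizing x' with
  | refl =>
    exact ⟨x', (isWLInvariant_mem_support hH).swap h hz,
      fun hc => hx (((isWLInvariant_reachable hH).iff h).mpr hc), Reachable.refl _⟩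
  | head hxb _ ih =>
    obtain ⟨hadj, -, hb⟩ := avoiding_adj.mp hxb
    obtain ⟨b', hbx, hub⟩ := h.exists_transfer _
    obtain ⟨z', hz', hb', hbz⟩ := ih hub hb
    have hx' : x' ∉ compVerts H u' := fun hc => hx (((isWLInvariant_reachable hH).iff h).mpr hc)
    refine ⟨z', hz', hx', (avoiding_adj.mpr ⟨?_, hx', hb'⟩).reachable.trans hbz⟩
    exact (IsWLInvariant.rel hbx hadj.symm).symm

end Invariance

theorem card_filter_not_le_card_filter {ι : Type} {s : Finset ι} {p : ι → Prop} [DecidablePred p]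
    {f g : ι → ℕ} (hsum : ∑ i ∈ s, f i = ∑ i ∈ s, g i) (hp : ∀ i ∈ s, p i → f i ≤ g i + 1)
    (hnp : ∀ i ∈ s, ¬ p i → f i + 1 ≤ g i) :
    (s.filter (¬ p ·)).card ≤ (s.filter p).card := by
  rw [← Finset.sum_filter_add_sum_filter_not s p f,
    ← Finset.sum_filter_add_sum_filter_not s p g] at hsum
  have h₁ : ∑ i ∈ s with p i, f i ≤ ∑ i ∈ s with p i, (g i + 1) :=
    Finset.sum_le_sum fun i hi => hp i (Finset.mem_filter.mp hi).1 (Finset.mem_filter.mp hi).2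
  have h₂ : ∑ i ∈ s with ¬ p i, (f i + 1) ≤ ∑ i ∈ s with ¬ p i, g i :=
    Finset.sum_le_sum fun i hi => hnp i (Finset.mem_filter.mp hi).1 (Finset.mem_filter.mp hi).2
  simp only [Finset.sum_add_distrib, Finset.sum_const, smul_eq_mul, mul_one] at h₁ h₂
  show (s.filter fun i => ¬ p i).card ≤ (s.filter fun i => p i).card
  omega

section Separation

variable {V : Type} [Fintype V] {G H : SimpleGraph V}

open Classical in
theorem card_not_reachable_avoiding_le (hconn : G.Connected) (hHG : H ≤ G)
    (hH : IsWLInvariant G.Adj H.Adj) {a s₀ x xA xv : V} (ha : a ∈ H.support)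
    (hxA : xA ∈ compVerts H a) (hx : x ∉ compVerts H a)
    (hxv : (avoiding G (compVerts H a)).Reachable x xv) (hstep : StepReach G H 1 xA xv)
    (hcA : wl2 G.Adj (xA, xA) (s₀, s₀)) (hcv : wl2 G.Adj (xv, xv) (s₀, s₀)) :
    ((Finset.univ.filter fun y => wl2 G.Adj (y, y) (s₀, s₀)).filter
        fun y => ¬ (avoiding G (compVerts H a)).Reachable x y).card ≤
      ((Finset.univ.filter fun y => wl2 G.Adj (y, y) (s₀, s₀)).filter
        fun y => (avoiding G (compVerts H a)).Reachable x y).card := by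
  set A := compVerts H a
  have hA : ∀ ⦃b c⦄, H.Reachable b c → b ∈ A → c ∈ A := fun _ _ hbc hb => Reachable.trans hb hbc
  have hAsupp : A ⊆ H.support := fun _ hb => mem_support_of_reachable_of_mem_support hb ha
  set s := Finset.univ.filter fun y => wl2 G.Adj (y, y) (s₀, s₀)
  have hsupp : ∀ y ∈ s, y ∈ H.support := fun y hy =>
    isWLInvariant_mem_support hH (hcA.trans (Finset.mem_filter.mp hy).2.symm) (hAsupp hxA)
  have hsum : ∑ y ∈ s, stepDist G H xA y = ∑ y ∈ s, stepDist G H xv y := by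
    simp only [s, Finset.sum_filter]
    refine wl2.sum_eq (F := fun x y => if wl2 G.Adj (y, y) (s₀, s₀) then stepDist G H x y else 0)
      (fun y z y' z' h => ?_) (hcA.trans hcv.symm)
    have hc : wl2 G.Adj (z, z) (s₀, s₀) ↔ wl2 G.Adj (z', z') (s₀, s₀) :=
      ⟨h.diag_right.symm.trans, h.diag_right.trans⟩
    simp only [hc, stepDist_congr hH h]
  refine card_filter_not_le_card_filter hsum
    (fun y hy _ => (stepDist_le (hstep.trans (stepReach_stepDist hconn (hsupp y hy)))).trans_eq
      (add_comm _ _))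
    (fun y hy hxy => ?_)
  obtain ⟨u, hu, j, hj, huy⟩ := StepReach.exists_mem_of_not_reachable_avoiding hHG hAsupp hA
    (notMem_of_reachable_avoiding hxv hx) (stepReach_stepDist hconn (hsupp y hy))
    (fun h => hxy (hxv.trans h))
  exact (Nat.add_le_add_right (stepDist_le
    (huy.reachable_left (Reachable.trans (Reachable.symm hxA) hu))) 1).trans hj

theorem exists_forall_reachable_avoiding (hconn : G.Connected) (hHG : H ≤ G)
    (hH : IsWLInvariant G.Adj H.Adj) {s₀ a : V}
    (hloc : ∀ v ∈ H.support, ∃ x, H.Reachable v x ∧ wl2 G.Adj (x, x) (s₀, s₀))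
    (ha : a ∈ H.support) (hne : (H.support \ compVerts H a).Nonempty) :
    ∃ z ∈ H.support \ compVerts H a,
      ∀ y ∈ H.support \ compVerts H a, (avoiding G (compVerts H a)).Reachable z y := by
  classical
  set A := compVerts H a
  have hA : ∀ ⦃b c⦄, H.Reachable b c → b ∈ A → c ∈ A := fun _ _ hbc hb => Reachable.trans hb hbc
  have hAsupp : A ⊆ H.support := fun _ hb => mem_support_of_reachable_of_mem_support hb ha
  set K := (avoiding G A).Reachable
  set s := Finset.univ.filter fun y => wl2 G.Adj (y, y) (s₀, s₀)
  obtain ⟨x₁, hx₁, hmin⟩ := Finset.exists_min_image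
    (Finset.univ.filter (· ∈ H.support \ A)) (fun x => (s.filter (K x)).card)
    (by obtain ⟨y, hy⟩ := hne; exact ⟨y, by simpa using hy⟩)
  simp only [Finset.mem_filter, Finset.mem_univ, true_and] at hx₁ hmin
  refine ⟨x₁, hx₁, ?_⟩
  by_contra! ⟨x₂, hx₂, hx₁₂⟩
  obtain ⟨k, hk⟩ := exists_stepReach hconn a hx₁.1
  obtain ⟨a', ha', v, hav, hvx₁⟩ :=
    StepReach.exists_linkedOutside hHG hAsupp hA (Reachable.refl a) hx₁.2 hk
  obtain ⟨xA, ha'xA, hxA⟩ := hloc a' (hAsupp ha')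
  obtain ⟨xv, hvxv, hxv⟩ := hloc v hav.1
  have hxAA : xA ∈ A := hA ha'xA ha'
  have hx₁xv : K x₁ xv := hvx₁.symm.trans (reachable_avoiding_of_reachable hHG hA hvxv
    (notMem_of_reachable_avoiding hvx₁.symm hx₁.2))
  have hcard : (s.filter (¬ K x₁ ·)).card ≤ (s.filter (K x₁)).card :=
    card_not_reachable_avoiding_le hconn hHG hH ha hxAA hx₁.2 hx₁xv
      (.inr ⟨a', Reachable.symm ha'xA, v, hav, hvxv⟩) hxA hxv
  have hlt : (s.filter (K x₂)).card < (s.filter (¬ K x₁ ·)).card := by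
    refine Finset.card_lt_card ((Finset.ssubset_iff_of_subset fun y hy => ?_).mpr ⟨xA, ?_, ?_⟩)
    · simp only [Finset.mem_filter] at hy ⊢
      exact ⟨hy.1, fun h => hx₁₂ (h.trans hy.2.symm)⟩
    · simp only [s, Finset.mem_filter, Finset.mem_univ, true_and]
      exact ⟨hxA, fun h => notMem_of_reachable_avoiding h hx₁.2 hxAA⟩
    · simp only [Finset.mem_filter, not_and]
      exact fun _ h => notMem_of_reachable_avoiding h hx₂.2 hxAA
  have := hmin x₂ hx₂
  omega

end Separation

theorem outerNeighborhood_componentWithin_eq {V : Type} [Fintype V] {G H : SimpleGraph V}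
    (hH : IsWLInvariant G.Adj H.Adj) {a z : V} (hz : z ∈ H.support \ compVerts H a)
    (hZ : ∀ y ∈ H.support \ compVerts H a, y ∈ componentWithin G (compVerts H a) z) :
    outerNeighborhood G (componentWithin G (compVerts H a) z) =
      {w | ∃ u ∈ outerNeighborhood G (componentWithin G (compVerts H a) z),
        wl2 G.Adj (u, u) (w, w)} ∩ compVerts H a := by
  set A := compVerts H a
  set Z := componentWithin G A z
  have hNA : outerNeighborhood G Z ⊆ A := by
    rintro u ⟨huZ, x, hx, hxu⟩
    by_contra huA
    obtain ⟨hzA, hzx⟩ := mem_componentWithin_iff.mp hx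
    exact huZ (mem_componentWithin_iff.mpr ⟨hzA, hzx.trans
      (avoiding_adj.mpr ⟨hxu, notMem_of_reachable_avoiding hzx hzA, huA⟩).reachable⟩)
  ext u
  refine ⟨fun hu => ⟨⟨u, hu, fun _ => rfl⟩, hNA hu⟩, ?_⟩
  rintro ⟨⟨u', hu', hu'u⟩, huA⟩
  have hu'A := hNA hu'
  obtain ⟨-, x', hx', hx'u'⟩ := hu'
  have hesc : G.Adj u' x' ∧ ∃ y ∈ H.support, y ∈ componentWithin G (compVerts H u') x' :=
    ⟨hx'u'.symm, z, hz.1, compVerts_eq_of_mem hu'A ▸ mem_componentWithin_symm hx'⟩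
  obtain ⟨x, hux, y, hy, hxy⟩ :=
    (IsWLInvariant.rel.and (isWLInvariant_exists_mem_support_componentWithin hH)).exists_right
      hu'u ⟨x', hesc⟩
  rw [compVerts_eq_of_mem huA] at hxy
  have hyZ := hZ y ⟨hy, (mem_componentWithin_iff.mp (mem_componentWithin_symm hxy)).1⟩
  exact ⟨fun huZ => (mem_componentWithin_iff.mp (mem_componentWithin_symm huZ)).1 huA, x,
    mem_componentWithin_trans hyZ (mem_componentWithin_symm hxy), hux.symm⟩

/-- Let `G` be a connected graph, `χ = WL²(G)`, and let `S` be
a locally determined set of edge colors (represented as a `wl2`-saturated set of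
adjacent pairs) such that `G[S]` is disconnected.  For the vertex set
`A = compVerts _ a` of any connected component of `G[S]` there are a
`χ`-invariant set `Wset` and the vertex set `Z` of a connected component of
`G − A` with `V(G[S]) ∖ A ⊆ Z` and `N_G(Z) = Wset ∩ A`. -/
theorem statement_18 {V : Type} [Fintype V] (G : SimpleGraph V) (hconn : G.Connected)
    (S : Set (V × V))
    (hedge : ∀ p ∈ S, G.Adj p.1 p.2)
    (hsat : ∀ p ∈ S, ∀ q : V × V, wl2 G.Adj p q → q ∈ S)
    (hld : ∀ p ∈ S, ∀ v ∈ (SimpleGraph.fromRel fun x y => (x, y) ∈ S).support,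
      ∃ x y : V, wl2 G.Adj (x, y) p ∧
        (SimpleGraph.fromRel fun x y => (x, y) ∈ S).Reachable v x)
    (hdisc : ¬ (onSupport (SimpleGraph.fromRel fun x y => (x, y) ∈ S)).Connected)
    (a : V) (ha : a ∈ (SimpleGraph.fromRel fun x y => (x, y) ∈ S).support) :
    ∃ Wset : Set V,
      (∀ v ∈ Wset, ∀ w : V, wl2 G.Adj (v, v) (w, w) → w ∈ Wset) ∧
      ∃ z : V, z ∉ compVerts (SimpleGraph.fromRel fun x y => (x, y) ∈ S) a ∧
        ((SimpleGraph.fromRel fun x y => (x, y) ∈ S).support \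
            compVerts (SimpleGraph.fromRel fun x y => (x, y) ∈ S) a ⊆
          componentWithin G (compVerts (SimpleGraph.fromRel fun x y => (x, y) ∈ S) a) z) ∧
        outerNeighborhood G
            (componentWithin G (compVerts (SimpleGraph.fromRel fun x y => (x, y) ∈ S) a) z) =
          Wset ∩ compVerts (SimpleGraph.fromRel fun x y => (x, y) ∈ S) a := by
  set H := SimpleGraph.fromRel fun x y => (x, y) ∈ S
  have hHG : H ≤ G := fun x y hxy => by
    obtain ⟨-, h | h⟩ := (fromRel_adj _ x y).mp hxy
    exacts [hedge _ h, (hedge _ h).symm]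
  have hH : IsWLInvariant G.Adj H.Adj := IsWLInvariant.fromRel fun _ _ _ _ h hxy => hsat _ hxy _ h
  obtain ⟨p₀, hp₀⟩ : ∃ p₀, p₀ ∈ S := by
    obtain ⟨t, hat⟩ := H.mem_support.mp ha
    obtain ⟨-, h | h⟩ := (fromRel_adj _ a t).mp hat
    exacts [⟨_, h⟩, ⟨_, h⟩]
  have hloc (v) (hv : v ∈ H.support) : ∃ x, H.Reachable v x ∧ wl2 G.Adj (x, x) (p₀.1, p₀.1) :=
    have ⟨x, _, hxy, hvx⟩ := hld p₀ hp₀ v hv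
    ⟨x, hvx, hxy.diag_left⟩
  have hne : (H.support \ compVerts H a).Nonempty := by
    rw [Set.nonempty_iff_ne_empty, Ne, Set.sdiff_eq_empty]
    exact fun h => hdisc (onSupport_connected ha h)
  obtain ⟨z, hz, hzA⟩ := exists_forall_reachable_avoiding hconn hHG hH hloc ha hne
  have hZ : ∀ y ∈ H.support \ compVerts H a, y ∈ componentWithin G (compVerts H a) z :=
    fun y hy => mem_componentWithin_iff.mpr ⟨hz.2, hzA y hy⟩
  refine ⟨{w | ∃ u ∈ outerNeighborhood G (componentWithin G (compVerts H a) z),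
    wl2 G.Adj (u, u) (w, w)}, ?_, z, hz.2, hZ, outerNeighborhood_componentWithin_eq hH hz hZ⟩
  exact fun v ⟨u, hu, huv⟩ w hvw => ⟨u, hu, huv.trans hvw⟩

end WL
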